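/- arXiv:math/0002100 — 2 statements merged into one kernel-verified Lean document; each statement's English description precedes it below -/
import Mathlib

section
/- Let p, p' be coprime positive integers with 1 ≤ p < p' < 2p, let 1 ≤ a < p', e ∈ {0,1}, and set a' = a + 1 - e + ⌊a·p/p'⌋. Then ⌊a'·p/(p'+p)⌋ = a - 1 - ⌊a·(p'-p)/p'⌋. -/
private lemma floor_int_div (m d : ℤ) (hd : 0 < d) : ⌊(m : ℚ) / (d : ℚ)⌋ = m / d := by
  obtain ⟨n, rfl⟩ : ∃ n : ℕ, d = (n : ℤ) := ⟨d.toNat, (Int.toNat_of_nonneg hd.le).symm⟩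
  exact_mod_cast Rat.floor_intCast_div_natCast m n

private lemma ediv_eq (x d k : ℤ) (hd : 0 < d) (h1 : k * d ≤ x) (h2 : x < (k + 1) * d) :
    x / d = k := by
  have h3 : k ≤ x / d := (Int.le_ediv_iff_mul_le hd).mpr h1
  have h4 : x / d < k + 1 := Int.ediv_lt_iff_lt_mul hd |>.mpr h2
  omega

theorem stmt5 (p p' a e : ℤ) (hp : 1 ≤ p) (hpp' : p < p') (h2p : p' < 2 * p)
    (hcop : IsCoprime p p') (ha : 1 ≤ a) (hap' : a < p') (he : e = 0 ∨ e = 1) :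
    ⌊(((a + 1 - e + ⌊(a * p : ℚ) / (p' : ℚ)⌋ : ℤ) : ℚ) * (p : ℚ)) / (((p' + p : ℤ)) : ℚ)⌋
      = a - 1 - ⌊(a * (p' - p) : ℚ) / (p' : ℚ)⌋ := by
  have hp' : (0:ℤ) < p' := by omega
  have hndvd : ¬ (p' ∣ a * p) := by
    intro h
    have h1 : p' ∣ a := (hcop.symm).dvd_of_dvd_mul_right h
    have := Int.le_of_dvd (by omega) h1
    omega
  -- f and r
  set f := (a * p) / p' with hf
  have hmod : a * p = p' * f + (a * p) % p' := (Int.mul_ediv_add_emod (a*p) p').symm.trans (by ring)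
  set r := (a * p) % p' with hr
  have hr0 : 0 < r := by
    have h0 : p' ≠ 0 := by omega
    rcases (Int.emod_nonneg (a*p) h0).lt_or_eq with h | h
    · exact h
    · exact absurd (Int.dvd_of_emod_eq_zero h.symm) hndvd
  have hrlt : r < p' := Int.emod_lt_of_pos _ hp'
  have he' : (0:ℤ) ≤ e * p ∧ e ≤ 1 := by
    rcases he with rfl | rfl <;> exact ⟨by nlinarith, by norm_num⟩
  have hfl1 : ⌊(a * p : ℚ) / (p' : ℚ)⌋ = f := by
    rw [show ((a * p : ℚ)) = ((a*p : ℤ) : ℚ) by push_cast; ring, floor_int_div _ _ hp']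
  have hfl2 : ⌊(a * (p' - p) : ℚ) / (p' : ℚ)⌋ = a - f - 1 := by
    rw [show ((a * (p' - p) : ℚ)) = ((a*(p'-p) : ℤ) : ℚ) by push_cast; ring,
      floor_int_div _ _ hp']
    apply ediv_eq _ _ _ hp' <;> nlinarith
  rw [hfl1, hfl2, show ((a + 1 - e + f : ℤ) : ℚ) * (p : ℚ) = (((a + 1 - e + f) * p : ℤ) : ℚ)
    by push_cast; ring, floor_int_div _ _ (by omega : (0:ℤ) < p' + p)]
  have : (a + 1 - e + f) * p / (p' + p) = f := by
    apply ediv_eq _ _ _ (by omega) <;> nlinarith [he'.1, he'.2]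
  omega
end

section
/- Let p'/p (coprime, 0 < p < p') have continued fraction data as in the Takahashi length construction. Then for 0 ≤ j ≤ t with zone index k = ζ(j), ⌊κ_j · p/p'⌋ = κ̃_j - [k ≡ 0 (mod 2)], where κ_j is the j-th Takahashi length and κ̃_j the j-th truncated Takahashi length, and [·] is 1 if the condition holds, else 0. -/
/-!
Put `f k = (-1)^(k+1) (y k p - z k p')`. Then `f 0 = p'`, `f 1 = p` and
`f k = c k f (k+1) + f (k+2)`, so `f` is the sequence of remainders of the Euclidean algorithm on
`(p', p)`; the continued fraction expansion of `p'/p` says that `f k / f (k+1)` is the complete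
quotient `x k = [c k; c (k+1), …, c n] ≥ 1`. Hence `f` is positive and decreasing on `0, …, n+1`.
For `j = t_k + m` with `1 ≤ m ≤ c k` (and `m < c n` in the last zone),
`κ_j p - κ̃_j p' = (-1)^(k+1) (f k - m f (k+1))`, and `f k - m f (k+1) = (x k - m) f (k+1)` lies
strictly between `0` and `p'`; so `κ_j p / p'` lies strictly between `κ̃_j` and `κ̃_j + 1` for odd
`k`, and strictly between `κ̃_j - 1` and `κ̃_j` for even `k`.
-/

/-- The value of a finite continued fraction `[c₀; c₁, …]`. -/
def cfVal : List ℚ → ℚ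
  | [] => 0
  | [x] => x
  | x :: xs => x + 1 / cfVal xs

lemma cfVal_cons (x : ℚ) {l : List ℚ} (h : l ≠ []) : cfVal (x :: l) = x + 1 / cfVal l := by
  cases l with
  | nil => exact absurd rfl h
  | cons a t => rfl

def cfTail (c : ℕ → ℤ) (n k : ℕ) : ℚ :=
  cfVal ((List.ofFn fun i : Fin (n + 1) => (c i : ℚ)).drop k)

section CompleteQuotients

variable {n : ℕ} {c : ℕ → ℤ} {x : ℕ → ℚ}

lemma one_le_of_complete_quotients (hx : ∀ k < n, x k = c k + 1 / x (k + 1)) (hxn : x n = c n)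
    {k : ℕ} (hc : ∀ i, k ≤ i → i ≤ n → 1 ≤ c i) (hk : k ≤ n) : 1 ≤ x k := by
  induction hk using Nat.decreasingInduction with
  | self => rw [hxn]; exact_mod_cast hc n le_rfl le_rfl
  | of_succ k hkn ih =>
    have hx_succ : 0 < x (k + 1) := zero_lt_one.trans_le (ih fun i hi => hc i (by omega))
    have hck : (1 : ℚ) ≤ c k := by exact_mod_cast hc k le_rfl hkn.le
    rw [hx k hkn]
    have := one_div_pos.mpr hx_succ
    linarith

lemma intCast_lt_of_complete_quotients (hx : ∀ k < n, x k = c k + 1 / x (k + 1))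
    (hxn : x n = c n) (hxpos : ∀ k ≤ n, 0 < x k) {k : ℕ} {m : ℤ} (hk : k ≤ n) (hm : m ≤ c k)
    (hmn : k = n → m < c n) : (m : ℚ) < x k := by
  rcases hk.lt_or_eq with hk | rfl
  · have hm' : (m : ℚ) ≤ c k := by exact_mod_cast hm
    rw [hx k hk]
    have := one_div_pos.mpr (hxpos (k + 1) hk)
    linarith
  · rw [hxn]
    exact_mod_cast hmn rfl

end CompleteQuotients

section cfTail

variable (c : ℕ → ℤ) (n : ℕ)

lemma cfTail_zero : cfTail c n 0 = cfVal (List.ofFn fun i : Fin (n + 1) => (c i : ℚ)) := rfl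

lemma drop_ofFn_eq_cons {k : ℕ} (hk : k ≤ n) :
    (List.ofFn fun i : Fin (n + 1) => (c i : ℚ)).drop k
      = (c k : ℚ) :: (List.ofFn fun i : Fin (n + 1) => (c i : ℚ)).drop (k + 1) := by
  rw [List.drop_eq_getElem_cons (by simp only [List.length_ofFn]; omega), List.getElem_ofFn]

lemma cfTail_of_lt {k : ℕ} (hk : k < n) : cfTail c n k = c k + 1 / cfTail c n (k + 1) := by
  rw [cfTail, drop_ofFn_eq_cons c n hk.le, cfVal_cons]
  · rfl
  · rw [← List.length_pos_iff, List.length_drop, List.length_ofFn]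
    omega

lemma cfTail_self : cfTail c n n = c n := by
  rw [cfTail, drop_ofFn_eq_cons c n le_rfl, List.drop_eq_nil_of_le (by simp)]
  rfl

lemma one_le_cfTail (hc : ∀ i, 1 ≤ i → i ≤ n → 1 ≤ c i) (h0 : 1 ≤ cfTail c n 0) :
    ∀ k ≤ n, 1 ≤ cfTail c n k
  | 0, _ => h0
  | k + 1, hk => one_le_of_complete_quotients (fun _ => cfTail_of_lt c n) (cfTail_self c n)
      (fun i hi hin => hc i (by omega) hin) hk

end cfTail

section EuclideanRemainders

variable {n : ℕ} {c : ℕ → ℤ} {x : ℕ → ℚ} {f : ℕ → ℤ}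

lemma cast_eq_mul_succ_of_remainders (hx : ∀ k < n, x k = c k + 1 / x (k + 1))
    (hx0 : ∀ k ≤ n, x k ≠ 0) (hf : ∀ k < n, f k = c k * f (k + 1) + f (k + 2))
    (hf0 : (f 0 : ℚ) = x 0 * f 1) : ∀ k ≤ n, (f k : ℚ) = x k * f (k + 1) := by
  intro k hk
  induction k with
  | zero => exact hf0
  | succ k ih =>
    have hrec : (f k : ℚ) = c k * f (k + 1) + f (k + 2) := by exact_mod_cast hf k (by omega)
    have hxk := hx k (by omega)
    have hx_succ := hx0 (k + 1) hk
    rw [ih (by omega), hxk] at hrec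
    field_simp at hrec
    linear_combination hrec

lemma pos_of_remainders (hxpos : ∀ k ≤ n, 0 < x k)
    (hfx : ∀ k ≤ n, (f k : ℚ) = x k * f (k + 1)) (hf0 : 0 < f 0) : ∀ k ≤ n + 1, 0 < f k := by
  intro k hk
  induction k with
  | zero => exact hf0
  | succ k ih =>
    have hfk : (0 : ℚ) < x k * f (k + 1) := by
      rw [← hfx k (by omega)]
      exact_mod_cast ih (by omega)
    exact_mod_cast pos_of_mul_pos_right hfk (hxpos k (by omega)).le

lemma le_apply_zero_of_remainders (hx1 : ∀ k ≤ n, 1 ≤ x k)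
    (hfx : ∀ k ≤ n, (f k : ℚ) = x k * f (k + 1)) (hfpos : ∀ k ≤ n + 1, 0 < f k) :
    ∀ k ≤ n + 1, f k ≤ f 0 := by
  intro k hk
  induction k with
  | zero => exact le_rfl
  | succ k ih =>
    have hle : (f (k + 1) : ℚ) ≤ f k := by
      rw [hfx k (by omega)]
      exact le_mul_of_one_le_left (by exact_mod_cast (hfpos (k + 1) hk).le) (hx1 k (by omega))
    exact (Int.cast_le.mp hle).trans (ih (by omega))

lemma sub_mul_succ_pos_of_remainders (hfx : ∀ k ≤ n, (f k : ℚ) = x k * f (k + 1))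
    (hfpos : ∀ k ≤ n + 1, 0 < f k) {k : ℕ} {m : ℤ} (hk : k ≤ n) (hm : (m : ℚ) < x k) :
    0 < f k - m * f (k + 1) := by
  have hfk : ((f k - m * f (k + 1) : ℤ) : ℚ) = (x k - m) * f (k + 1) := by
    push_cast
    rw [hfx k hk]
    ring
  have : (0 : ℚ) < (x k - m) * f (k + 1) :=
    mul_pos (sub_pos.mpr hm) (by exact_mod_cast hfpos (k + 1) (by omega))
  exact_mod_cast hfk ▸ this

lemma sub_mul_succ_mem_Ioo_of_remainders (hx : ∀ k < n, x k = c k + 1 / x (k + 1))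
    (hxn : x n = c n) (hx1 : ∀ k ≤ n, 1 ≤ x k) (hf : ∀ k < n, f k = c k * f (k + 1) + f (k + 2))
    (hf0 : (f 0 : ℚ) = x 0 * f 1) (hf0pos : 0 < f 0) {k : ℕ} {m : ℤ} (hk : k ≤ n) (hm1 : 1 ≤ m)
    (hm : m ≤ c k) (hmn : k = n → m < c n) : f k - m * f (k + 1) ∈ Set.Ioo 0 (f 0) := by
  have hxpos k (hk : k ≤ n) : 0 < x k := zero_lt_one.trans_le (hx1 k hk)
  have hfx := cast_eq_mul_succ_of_remainders hx (fun k hk => (hxpos k hk).ne') hf hf0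
  have hfpos := pos_of_remainders hxpos hfx hf0pos
  refine ⟨sub_mul_succ_pos_of_remainders hfx hfpos hk
    (intCast_lt_of_complete_quotients hx hxn hxpos hk hm hmn), ?_⟩
  have := mul_pos (hm1.trans_lt' zero_lt_one) (hfpos (k + 1) (by omega))
  linarith [le_apply_zero_of_remainders hx1 hfx hfpos k (by omega)]

end EuclideanRemainders

section Convergents

variable {n : ℕ} {c : ℕ → ℤ} {y z : ℕ → ℤ} {p p' : ℤ}

def convergentRemainder (y z : ℕ → ℤ) (p p' : ℤ) (k : ℕ) : ℤ :=
  (-1) ^ (k + 1) * (y k * p - z k * p')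

lemma convergentRemainder_recurrence (hy : ∀ k < n, y (k + 2) = c k * y (k + 1) + y k)
    (hz : ∀ k < n, z (k + 2) = c k * z (k + 1) + z k) {k : ℕ} (hk : k < n) :
    convergentRemainder y z p p' k
      = c k * convergentRemainder y z p p' (k + 1) + convergentRemainder y z p p' (k + 2) := by
  simp only [convergentRemainder, hy k hk, hz k hk]
  ring

lemma mul_sub_mul_eq_convergentRemainder (k : ℕ) (m : ℤ) :
    (y k + m * y (k + 1)) * p - (z k + m * z (k + 1)) * p'
      = (-1) ^ (k + 1) * (convergentRemainder y z p p' k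
          - m * convergentRemainder y z p p' (k + 1)) := by
  have hsq : ((-1 : ℤ) ^ (k + 1)) ^ 2 = 1 := by rw [← pow_mul, mul_comm, pow_mul]; simp
  simp only [convergentRemainder]
  linear_combination (-(y k * p - z k * p' + m * (y (k + 1) * p - z (k + 1) * p'))) * hsq

end Convergents

lemma floor_intCast_div_eq_sub_ite {N b q r : ℤ} (k : ℕ) (hr : 0 < r) (hrq : r < q)
    (h : N - b * q = (-1) ^ (k + 1) * r) :
    ⌊(N : ℚ) / q⌋ = b - if k % 2 = 0 then 1 else 0 := by
  have hq : (0 : ℚ) < q := by exact_mod_cast hr.trans hrq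
  rw [Int.floor_eq_iff, le_div_iff₀ hq, div_lt_iff₀ hq]
  rcases Nat.even_or_odd k with hk | hk
  · rw [(Even.add_one hk).neg_one_pow] at h
    simp only [Nat.even_iff.mp hk, if_true]
    push_cast
    constructor <;> norm_cast <;> linarith
  · rw [(Odd.add_one hk).neg_one_pow] at h
    simp only [Nat.odd_iff.mp hk, one_ne_zero, if_false]
    push_cast
    constructor <;> norm_cast <;> linarith

theorem stmt15_general (p p' : ℤ) (n : ℕ) (c : ℕ → ℤ) (y z : ℕ → ℤ) (tz : ℕ → ℤ)
    (hp : 0 < p) (hpp' : p < p')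
    (hci : ∀ i, 0 < i → i < n → 1 ≤ c i) (hcn : 2 ≤ c n)
    (hcf : (p' : ℚ) / (p : ℚ) = cfVal (List.ofFn fun i : Fin (n + 1) => (c i : ℚ)))
    (hy0 : y 0 = 0) (hy1 : y 1 = 1) (hz0 : z 0 = 1) (hz1 : z 1 = 0)
    (hy : ∀ k, 1 ≤ k → k ≤ n + 1 → y (k + 1) = c (k - 1) * y k + y (k - 1))
    (hz : ∀ k, 1 ≤ k → k ≤ n + 1 → z (k + 1) = c (k - 1) * z k + z (k - 1))
    (htz : ∀ k, tz k = -1 + ∑ i ∈ Finset.range k, c i) :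
    ∀ (j : ℤ) (k : ℕ), k ≤ n → 0 ≤ j → j ≤ tz (n + 1) - 1 →
      tz k < j → j ≤ tz (k + 1) →
      ⌊(((y k + (j - tz k) * y (k + 1)) * p : ℤ) : ℚ) / (p' : ℚ)⌋
        = z k + (j - tz k) * z (k + 1) - (if k % 2 = 0 then 1 else 0) := by
  intro j k hkn _ hjt hlow hhigh
  have htz_succ (k : ℕ) : tz (k + 1) = tz k + c k := by
    rw [htz, htz, Finset.sum_range_succ]; ring
  have hx0 : cfTail c n 0 = p' / p := (cfTail_zero c n).trans hcf.symm
  have hx1 := one_le_cfTail c n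
    (fun i hi hin => hin.lt_or_eq.elim (hci i hi) fun h => h ▸ by omega)
    (by rw [hx0, one_le_div (by exact_mod_cast hp)]; exact_mod_cast hpp'.le)
  set f := convergentRemainder y z p p'
  have hf : ∀ k < n, f k = c k * f (k + 1) + f (k + 2) :=
    fun k => convergentRemainder_recurrence (fun k _ => hy (k + 1) (by omega) (by omega))
      (fun k _ => hz (k + 1) (by omega) (by omega))
  have hf0 : f 0 = p' := by simp [f, convergentRemainder, hy0, hz0]
  have hf1 : f 1 = p := by simp [f, convergentRemainder, hy1, hz1]
  obtain ⟨hr0, hr⟩ := sub_mul_succ_mem_Ioo_of_remainders (fun _ => cfTail_of_lt c n)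
    (cfTail_self c n) hx1 hf (by rw [hf0, hf1, hx0]; field_simp) (hf0 ▸ hp.trans hpp') hkn
    (m := j - tz k) (by omega) (by linarith [htz_succ k]) (by rintro rfl; linarith [htz_succ k])
  exact floor_intCast_div_eq_sub_ite k hr0 (hf0 ▸ hr) (mul_sub_mul_eq_convergentRemainder k _)

theorem stmt15 (p p' : ℤ) (n : ℕ) (c : ℕ → ℤ) (y z : ℕ → ℤ) (tz : ℕ → ℤ)
    (hp : 0 < p) (hpp' : p < p') (hcop : IsCoprime p p')
    (hc0 : 0 ≤ c 0) (hci : ∀ i, 0 < i → i < n → 1 ≤ c i) (hcn : 2 ≤ c n)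
    (hcf : (p' : ℚ) / (p : ℚ) = cfVal (List.ofFn fun i : Fin (n + 1) => (c i : ℚ)))
    (hy0 : y 0 = 0) (hy1 : y 1 = 1) (hz0 : z 0 = 1) (hz1 : z 1 = 0)
    (hy : ∀ k, 1 ≤ k → k ≤ n + 1 → y (k + 1) = c (k - 1) * y k + y (k - 1))
    (hz : ∀ k, 1 ≤ k → k ≤ n + 1 → z (k + 1) = c (k - 1) * z k + z (k - 1))
    (htz : ∀ k, tz k = -1 + ∑ i ∈ Finset.range k, c i) :
    ∀ (j : ℤ) (k : ℕ), k ≤ n → 0 ≤ j → j ≤ tz (n + 1) - 1 →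
      tz k < j → j ≤ tz (k + 1) →
      ⌊(((y k + (j - tz k) * y (k + 1)) * p : ℤ) : ℚ) / (p' : ℚ)⌋
        = z k + (j - tz k) * z (k + 1) - (if k % 2 = 0 then 1 else 0) :=
  stmt15_general p p' n c y z tz hp hpp' hci hcn hcf hy0 hy1 hz0 hz1 hy hz htz
end
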